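/- arXiv:1906.09633 — 2 statements merged into one kernel-verified Lean document; each statement's English description precedes it below -/
import Mathlib

section
/- For any partition λ with at most m parts, the support of the Schur polynomial, i.e. the set {μ ∈ ℕ^m : K_{λμ} > 0} of weights of semistandard Young tableaux of shape λ with entries in {1,…,m}, is an M-convex subset of ℤ^m. -/
/-- The Kostka number: the number of semistandard Young tableaux of shape `lam` with entries
in `{0, …, b-1}` (representing `{1, …, b}`) such that the entry `i` occurs exactly `μ i` times
for every `i < m`. -/
noncomputable def kostka (lam : YoungDiagram) (b : ℕ) {m : ℕ} (μ : Fin m → ℕ) : ℕ :=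
  Nat.card {T : SemistandardYoungTableau lam //
    (∀ c ∈ lam.cells, T c.1 c.2 < b) ∧
    ∀ i : Fin m, (lam.cells.filter fun c => T c.1 c.2 = (i : ℕ)).card = μ i}
/-- A subset `J ⊆ ℤⁿ` is M-convex if for any index `i` and any `α, β ∈ J` with `α i > β i`
there is an index `j` with `α j < β j` such that `α - eᵢ + eⱼ ∈ J` and `β - eⱼ + eᵢ ∈ J`. -/
def MConvex {n : ℕ} (J : Set (Fin n → ℤ)) : Prop :=
  ∀ i : Fin n, ∀ α ∈ J, ∀ β ∈ J, β i < α i →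
    ∃ j : Fin n, α j < β j ∧
      α - Pi.single i 1 + Pi.single j 1 ∈ J ∧ β - Pi.single j 1 + Pi.single i 1 ∈ J

namespace SchurMC

open Finset

/-- Partial sums of row lengths. -/
def g (lam : YoungDiagram) (k : ℕ) : ℕ := ∑ r ∈ Finset.range k, lam.rowLen r

lemma g_succ (lam : YoungDiagram) (k : ℕ) : g lam (k+1) = g lam k + lam.rowLen k := by
  simp [g, Finset.sum_range_succ]

lemma g_concave (lam : YoungDiagram) (a b d : ℕ) (hab : a ≤ b) :
    g lam (b + d) + g lam a ≤ g lam (a + d) + g lam b := by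
  induction d with
  | zero => simp [Nat.add_comm]
  | succ d ih =>
      have h1 : lam.rowLen (b + d) ≤ lam.rowLen (a + d) :=
        lam.rowLen_anti _ _ (by omega)
      have h2 := g_succ lam (b + d)
      have h3 := g_succ lam (a + d)
      have e1 : b + (d + 1) = (b + d) + 1 := rfl
      have e2 : a + (d + 1) = (a + d) + 1 := rfl
      rw [e1, e2, h2, h3]
      omega

lemma rowLen_zero_of_le {lam : YoungDiagram} {m r : ℕ} (h : lam.colLen 0 ≤ m) (hr : m ≤ r) :
    lam.rowLen r = 0 := by
  by_contra hne
  have h0 : (r, 0) ∈ lam := YoungDiagram.mem_iff_lt_rowLen.2 (by omega)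
  have := YoungDiagram.mem_iff_lt_colLen.1 h0
  omega

/-- The number of cells in rows `< k` is `g lam k`. -/
lemma card_filter_row_lt (lam : YoungDiagram) (k : ℕ) :
    (lam.cells.filter fun c => c.1 < k).card = g lam k := by
  have hset : lam.cells.filter (fun c => c.1 < k) = (Finset.range k).biUnion lam.row := by
    ext c
    simp only [Finset.mem_filter, Finset.mem_biUnion, Finset.mem_range,
      YoungDiagram.mem_row_iff, YoungDiagram.mem_cells]
    constructor
    · rintro ⟨hc, hlt⟩; exact ⟨c.1, hlt, hc, rfl⟩
    · rintro ⟨r, hr, hc, rfl⟩; exact ⟨hc, hr⟩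
  rw [hset, Finset.card_biUnion]
  · exact Finset.sum_congr rfl fun r _ => (lam.rowLen_eq_card).symm
  · intro x _ y _ hxy
    simp only [Finset.disjoint_left, YoungDiagram.mem_row_iff]
    rintro c ⟨_, rfl⟩ ⟨_, h2⟩
    exact hxy h2

lemma card_cells (lam : YoungDiagram) {m : ℕ} (h : lam.colLen 0 ≤ m) :
    lam.cells.card = g lam m := by
  rw [← card_filter_row_lt lam m]
  congr 1
  symm
  apply (Finset.filter_eq_self).2
  intro c hc
  have hc' : (c.1, 0) ∈ lam := lam.up_left_mem le_rfl (Nat.zero_le _) (by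
    simpa using (YoungDiagram.mem_cells _).1 hc)
  have := YoungDiagram.mem_iff_lt_colLen.1 hc'
  omega


section Forward

variable {lam : YoungDiagram} (T : SemistandardYoungTableau lam)

/-- count of cells above `c` in its column with entry in `B` -/
private def nAbove (B : Finset ℕ) (c : ℕ × ℕ) : ℕ :=
  (lam.cells.filter fun d => d.2 = c.2 ∧ d.1 < c.1 ∧ T d.1 d.2 ∈ B).card

lemma nAbove_lt_of_lt {B : Finset ℕ} {c c' : ℕ × ℕ}
    (hc : c ∈ lam.cells.filter fun c => T c.1 c.2 ∈ B)
    (hcol : c.2 = c'.2) (hrow : c.1 < c'.1) :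
    nAbove T B c < nAbove T B c' := by
  apply Finset.card_lt_card
  constructor
  · intro d hd
    simp only [Finset.mem_filter] at hd ⊢
    exact ⟨hd.1, hd.2.1.trans hcol, by omega, hd.2.2.2⟩
  · intro hsub
    simp only [Finset.mem_filter] at hc
    have : c ∈ lam.cells.filter fun d => d.2 = c'.2 ∧ d.1 < c'.1 ∧ T d.1 d.2 ∈ B := by
      simp only [Finset.mem_filter]
      exact ⟨hc.1, hcol, hrow, hc.2⟩
    have := hsub this
    simp only [Finset.mem_filter] at this
    omega

lemma weight_le (B : Finset ℕ) :
    (lam.cells.filter fun c => T c.1 c.2 ∈ B).card ≤ g lam B.card := by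
  rw [← card_filter_row_lt lam B.card]
  apply Finset.card_le_card_of_injOn (fun c => (nAbove T B c, c.2))
  · intro c hc
    simp only [Finset.mem_coe, Finset.mem_filter, YoungDiagram.mem_cells] at hc ⊢
    obtain ⟨hcl, hcB⟩ := hc
    have hle : nAbove T B c ≤ c.1 := by
      have : (lam.cells.filter fun d => d.2 = c.2 ∧ d.1 < c.1 ∧ T d.1 d.2 ∈ B)
          ⊆ (Finset.range c.1) ×ˢ {c.2} := by
        intro d hd
        simp only [Finset.mem_filter] at hd
        simp only [Finset.mem_product, Finset.mem_range, Finset.mem_singleton]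
        exact ⟨hd.2.2.1, hd.2.1⟩
      calc nAbove T B c ≤ ((Finset.range c.1) ×ˢ {c.2}).card := Finset.card_le_card this
        _ = c.1 := by simp
    refine ⟨lam.up_left_mem hle le_rfl (by simpa using hcl), ?_⟩
    -- nAbove < B.card
    have hcl' : (c.1, c.2) ∈ lam := by simpa using hcl
    have hinj : nAbove T B c ≤ (B.filter fun v => v < T c.1 c.2).card := by
      apply Finset.card_le_card_of_injOn (fun d => T d.1 d.2)
      · intro d hd
        simp only [Finset.mem_coe, Finset.mem_filter, YoungDiagram.mem_cells] at hd ⊢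
        obtain ⟨hdl, hdc, hdr, hdB⟩ := hd
        refine ⟨hdB, ?_⟩
        have h2 : T d.1 c.2 < T c.1 c.2 := T.col_strict hdr hcl'
        rwa [hdc]
      · intro d1 h1 d2 h2 heq
        simp only [Finset.mem_coe, Finset.mem_filter, YoungDiagram.mem_cells] at h1 h2
        obtain ⟨h1l, h1c, h1r, h1B⟩ := h1
        obtain ⟨h2l, h2c, h2r, h2B⟩ := h2
        by_contra hne
        have h2l' : (d2.1, d2.2) ∈ lam := by rwa [Prod.mk.eta]
        have h1l' : (d1.1, d1.2) ∈ lam := by rwa [Prod.mk.eta]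
        have heq' : T d1.1 d1.2 = T d2.1 d2.2 := heq
        rw [h1c] at heq'
        rw [h2c] at heq'
        rcases Nat.lt_trichotomy d1.1 d2.1 with h | h | h
        · have hstep : T d1.1 d2.2 < T d2.1 d2.2 := T.col_strict h h2l'
          rw [h2c] at hstep
          omega
        · exact hne (Prod.ext h (h1c.trans h2c.symm))
        · have hstep : T d2.1 d1.2 < T d1.1 d1.2 := T.col_strict h h1l'
          rw [h1c] at hstep
          omega
    have hlt : (B.filter fun v => v < T c.1 c.2).card < B.card := by
      apply Finset.card_lt_card
      constructor
      · exact Finset.filter_subset _ _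
      · intro hsub
        have := hsub hcB
        simp only [Finset.mem_filter] at this
        omega
    omega
  · intro c1 h1 c2 h2 heq
    simp only [Prod.mk.injEq] at heq
    obtain ⟨hn, hcol⟩ := heq
    by_contra hne
    rcases Nat.lt_trichotomy c1.1 c2.1 with h | h | h
    · have := nAbove_lt_of_lt T h1 hcol h; omega
    · exact hne (Prod.ext h hcol)
    · have := nAbove_lt_of_lt T h2 hcol.symm h; omega

/-- Sum over a set of letters of the weight equals number of cells with entry in that set. -/
lemma sum_weight_eq {m : ℕ} {μ : Fin m → ℕ}
    (hT : ∀ i : Fin m, (lam.cells.filter fun c => T c.1 c.2 = (i : ℕ)).card = μ i)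
    (A : Finset (Fin m)) :
    ∑ i ∈ A, μ i = (lam.cells.filter fun c => T c.1 c.2 ∈ A.image Fin.val).card := by
  classical
  have hsplit : (lam.cells.filter fun c => T c.1 c.2 ∈ A.image Fin.val)
      = A.biUnion fun i => lam.cells.filter fun c => T c.1 c.2 = (i : ℕ) := by
    ext c
    simp only [Finset.mem_filter, Finset.mem_biUnion, Finset.mem_image]
    constructor
    · rintro ⟨hc, i, hi, hv⟩; exact ⟨i, hi, hc, hv.symm⟩
    · rintro ⟨i, hi, hc, hv⟩; exact ⟨hc, i, hi, hv.symm⟩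
  rw [hsplit, Finset.card_biUnion]
  · exact Finset.sum_congr rfl fun i _ => (hT i).symm
  · intro x _ y _ hxy
    simp only [Finset.disjoint_left, Finset.mem_filter]
    rintro c ⟨_, h1⟩ ⟨_, h2⟩
    exact hxy (Fin.val_injective (h1.symm.trans h2))

/-- Forward direction: weights of tableaux satisfy the polytope inequalities. -/
lemma weight_mem_polytope {m : ℕ} {μ : Fin m → ℕ} (hlam : lam.colLen 0 ≤ m)
    (hTb : ∀ c ∈ lam.cells, T c.1 c.2 < m)
    (hT : ∀ i : Fin m, (lam.cells.filter fun c => T c.1 c.2 = (i : ℕ)).card = μ i) :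
    (∀ A : Finset (Fin m), ∑ i ∈ A, μ i ≤ g lam A.card) ∧ ∑ i, μ i = g lam m := by
  constructor
  · intro A
    rw [sum_weight_eq T hT A]
    have := weight_le T (A.image Fin.val)
    rwa [Finset.card_image_of_injective _ Fin.val_injective] at this
  · rw [sum_weight_eq T hT Finset.univ, ← card_cells lam hlam]
    congr 1
    apply Finset.ext
    intro c
    simp only [Finset.mem_filter, Finset.mem_image, Finset.mem_univ, true_and]
    exact ⟨fun h => h.1, fun hc => ⟨hc, ⟨T c.1 c.2, hTb c hc⟩, rfl⟩⟩

end Forward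

section Backward

/-- Row lengths after removing a greedy bottom horizontal strip of size `c`. -/
def nuLen (lam : YoungDiagram) (c r : ℕ) : ℕ :=
  (lam.rowLen r - c) + min c (lam.rowLen (r+1))

lemma nuLen_le (lam : YoungDiagram) (c r : ℕ) : nuLen lam c r ≤ lam.rowLen r := by
  have := lam.rowLen_anti r (r+1) (by omega)
  unfold nuLen; omega

lemma nuLen_ge (lam : YoungDiagram) (c r : ℕ) : lam.rowLen (r+1) ≤ nuLen lam c r := by
  have := lam.rowLen_anti r (r+1) (by omega)
  unfold nuLen; omega

lemma nuLen_anti (lam : YoungDiagram) (c : ℕ) {r1 r2 : ℕ} (h : r1 ≤ r2) :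
    nuLen lam c r2 ≤ nuLen lam c r1 := by
  have h1 := lam.rowLen_anti r1 r2 h
  have h2 := lam.rowLen_anti (r1+1) (r2+1) (by omega)
  unfold nuLen; omega

/-- The diagram obtained by removing a greedy bottom horizontal strip of size `c`. -/
def nu (lam : YoungDiagram) (c : ℕ) : YoungDiagram where
  cells := lam.cells.filter fun p => p.2 < nuLen lam c p.1
  isLowerSet := by
    intro a b hba ha
    simp only [Finset.coe_filter, Set.mem_setOf_eq, YoungDiagram.mem_cells] at ha ⊢
    refine ⟨lam.isLowerSet hba ha.1, ?_⟩
    calc b.2 ≤ a.2 := hba.2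
      _ < nuLen lam c a.1 := ha.2
      _ ≤ nuLen lam c b.1 := nuLen_anti lam c hba.1

lemma mem_nu {lam : YoungDiagram} {c r j : ℕ} :
    (r, j) ∈ nu lam c ↔ j < nuLen lam c r := by
  show (r, j) ∈ (nu lam c).cells ↔ _
  simp only [nu, Finset.mem_filter, YoungDiagram.mem_cells]
  constructor
  · exact fun h => h.2
  · intro h
    refine ⟨YoungDiagram.mem_iff_lt_rowLen.2 ?_, h⟩
    exact lt_of_lt_of_le h (nuLen_le lam c r)

lemma nu_subset {lam : YoungDiagram} {c : ℕ} {p : ℕ × ℕ} (h : p ∈ nu lam c) : p ∈ lam := by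
  have : p ∈ (nu lam c).cells := h
  simp only [nu, Finset.mem_filter, YoungDiagram.mem_cells] at this
  exact this.1

lemma rowLen_nu (lam : YoungDiagram) (c r : ℕ) : (nu lam c).rowLen r = nuLen lam c r := by
  apply le_antisymm
  · by_contra h
    have : (r, nuLen lam c r) ∈ nu lam c := YoungDiagram.mem_iff_lt_rowLen.2 (by omega)
    have := mem_nu.1 this
    omega
  · by_contra h
    have hmem : (r, (nu lam c).rowLen r) ∈ nu lam c := mem_nu.2 (by omega)
    have := YoungDiagram.mem_iff_lt_rowLen.1 hmem
    omega

lemma g_nu (lam : YoungDiagram) {c : ℕ} (hc : c ≤ lam.rowLen 0) (k : ℕ) :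
    g (nu lam c) k + c = g lam k + min c (lam.rowLen k) := by
  induction k with
  | zero => simp [g]; omega
  | succ k ih =>
      rw [g_succ, g_succ, rowLen_nu]
      unfold nuLen
      omega

theorem exists_tableau : ∀ (m : ℕ) (lam : YoungDiagram), lam.colLen 0 ≤ m → ∀ (μ : Fin m → ℕ),
    (∀ A : Finset (Fin m), ∑ i ∈ A, μ i ≤ g lam A.card) → (∑ i, μ i = g lam m) →
    ∃ T : SemistandardYoungTableau lam, (∀ p ∈ lam.cells, T p.1 p.2 < m) ∧
      ∀ i : Fin m, (lam.cells.filter fun p => T p.1 p.2 = (i : ℕ)).card = μ i := by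
  intro m
  induction m with
  | zero =>
      intro lam hlam μ _ _
      refine ⟨SemistandardYoungTableau.highestWeight lam, ?_, fun i => i.elim0⟩
      intro p hp
      exfalso
      have hp' : (p.1, 0) ∈ lam := lam.up_left_mem le_rfl (Nat.zero_le _)
        ((YoungDiagram.mem_cells _).1 hp)
      have := YoungDiagram.mem_iff_lt_colLen.1 hp'
      omega
  | succ m' ih =>
      intro lam hlam μ hle hsum
      set c := μ (Fin.last m') with hc
      -- c ≤ rowLen 0
      have hg1 : g lam 1 = lam.rowLen 0 := by simp [g]
      have hc1 : c ≤ lam.rowLen 0 := by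
        have := hle {Fin.last m'}
        simpa [hg1] using this
      -- rowLen m' ≤ c
      have hcard_erase : (Finset.univ.erase (Fin.last m')).card = m' := by
        rw [Finset.card_erase_of_mem (Finset.mem_univ _)]
        simp
      have hsum_erase : ∑ i ∈ Finset.univ.erase (Fin.last m'), μ i + c = g lam (m' + 1) := by
        rw [← hsum]
        exact Finset.sum_erase_add _ _ (Finset.mem_univ _)
      have hc2 : lam.rowLen m' ≤ c := by
        have h1 := hle (Finset.univ.erase (Fin.last m'))
        rw [hcard_erase] at h1
        have h2 := g_succ lam m'
        omega
      have hgnum' : g (nu lam c) m' + c = g lam (m' + 1) := by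
        have := g_nu lam hc1 m'
        have h2 := g_succ lam m'
        omega
      -- colLen of nu
      have hnuLenm' : nuLen lam c m' = 0 := by
        have h0 : lam.rowLen (m' + 1) = 0 := rowLen_zero_of_le hlam le_rfl
        unfold nuLen
        omega
      have hnucol : (nu lam c).colLen 0 ≤ m' := by
        by_contra h
        have : (m', 0) ∈ nu lam c := YoungDiagram.mem_iff_lt_colLen.2 (by omega)
        have := mem_nu.1 this
        omega
      -- the reduced weight satisfies the polytope conditions for nu
      have hle' : ∀ A : Finset (Fin m'), ∑ i ∈ A, μ (Fin.castSucc i) ≤ g (nu lam c) A.card := by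
        intro A
        set B := A.map Fin.castSuccEmb with hB
        have hBcard : B.card = A.card := Finset.card_map _
        have hBsum : ∑ i ∈ B, μ i = ∑ i ∈ A, μ (Fin.castSucc i) := Finset.sum_map _ _ _
        have hgnuk := g_nu lam hc1 A.card
        rcases le_total c (lam.rowLen A.card) with hck | hck
        · have hBle := hle B
          rw [hBcard, hBsum] at hBle
          omega
        · have hlast : Fin.last m' ∉ B := by
            simp only [hB, Finset.mem_map]
            rintro ⟨a, _, ha⟩
            exact absurd ha (Fin.castSucc_lt_last a).ne
          have hBle := hle (insert (Fin.last m') B)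
          rw [Finset.sum_insert hlast, Finset.card_insert_of_notMem hlast, hBcard] at hBle
          have h2 := g_succ lam A.card
          rw [hBsum] at hBle
          omega
      have hsum' : ∑ i : Fin m', μ (Fin.castSucc i) = g (nu lam c) m' := by
        have h1 : ∑ i : Fin (m' + 1), μ i
            = ∑ i : Fin m', μ (Fin.castSucc i) + μ (Fin.last m') := Fin.sum_univ_castSucc μ
        rw [h1] at hsum
        omega
      obtain ⟨T', hT'b, hT'c⟩ := ih (nu lam c) hnucol (fun i => μ (Fin.castSucc i)) hle' hsum'
      -- build the extended tableau
      set E : ℕ → ℕ → ℕ := fun r j =>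
        if (r, j) ∈ lam ∧ (r, j) ∉ nu lam c then m' else T' r j with hE
      have hEold : ∀ {r j : ℕ}, (r, j) ∈ nu lam c → E r j = T' r j := by
        intro r j h
        simp only [hE]
        rw [if_neg]
        tauto
      have hEnew : ∀ {r j : ℕ}, (r, j) ∈ lam → (r, j) ∉ nu lam c → E r j = m' := by
        intro r j h1 h2
        simp only [hE]
        rw [if_pos ⟨h1, h2⟩]
      have hEout : ∀ {r j : ℕ}, (r, j) ∉ lam → E r j = 0 := by
        intro r j h
        simp only [hE]
        rw [if_neg (by tauto)]
        exact T'.zeros (fun hn => h (nu_subset hn))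
      have hT'lt : ∀ {r j : ℕ}, (r, j) ∈ nu lam c → T' r j < m' := by
        intro r j h
        exact hT'b (r, j) h
      have hrow : ∀ {i j1 j2 : ℕ}, j1 < j2 → (i, j2) ∈ lam → E i j1 ≤ E i j2 := by
        intro i j1 j2 hj hcell
        by_cases h2 : (i, j2) ∈ nu lam c
        · have h1 : (i, j1) ∈ nu lam c := mem_nu.2 (lt_trans hj (mem_nu.1 h2))
          rw [hEold h1, hEold h2]
          exact T'.row_weak hj h2
        · rw [hEnew hcell h2]
          have hcell1 : (i, j1) ∈ lam := lam.up_left_mem le_rfl hj.le hcell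
          by_cases h1 : (i, j1) ∈ nu lam c
          · rw [hEold h1]; exact (hT'lt h1).le
          · rw [hEnew hcell1 h1]
      have hcol : ∀ {i1 i2 j : ℕ}, i1 < i2 → (i2, j) ∈ lam → E i1 j < E i2 j := by
        intro i1 i2 j hi hcell
        by_cases h2 : (i2, j) ∈ nu lam c
        · have h1 : (i1, j) ∈ nu lam c :=
            mem_nu.2 (lt_of_lt_of_le (mem_nu.1 h2) (nuLen_anti lam c hi.le))
          rw [hEold h1, hEold h2]
          exact T'.col_strict hi h2
        · rw [hEnew hcell h2]
          have h1 : (i1, j) ∈ nu lam c := by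
            apply mem_nu.2
            calc j < lam.rowLen i2 := YoungDiagram.mem_iff_lt_rowLen.1 hcell
              _ ≤ lam.rowLen (i1 + 1) := lam.rowLen_anti _ _ hi
              _ ≤ nuLen lam c i1 := nuLen_ge lam c i1
          rw [hEold h1]
          exact hT'lt h1
      set T : SemistandardYoungTableau lam :=
        ⟨E, fun {i j1 j2} hj hcell => hrow hj hcell,
            fun {i1 i2 j} hi hcell => hcol hi hcell,
            fun {i j} h => hEout h⟩ with hT
      have hTapp : ∀ r j, T r j = E r j := fun _ _ => rfl
      refine ⟨T, ?_, ?_⟩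
      · intro p hp
        rw [hTapp]
        by_cases h : (p.1, p.2) ∈ nu lam c
        · rw [hEold h]; exact Nat.lt_succ_of_lt (hT'lt h)
        · rw [hEnew ((YoungDiagram.mem_cells _).1 hp) h]; omega
      · intro i
        by_cases hi : i = Fin.last m'
        · subst hi
          have hset : (lam.cells.filter fun p => T p.1 p.2 = ((Fin.last m' : Fin (m'+1)) : ℕ))
              = lam.cells \ (nu lam c).cells := by
            ext p
            simp only [Finset.mem_filter, Finset.mem_sdiff, Fin.val_last, hTapp]
            constructor
            · rintro ⟨hp, hEp⟩
              refine ⟨hp, fun hnp => ?_⟩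
              have : (p.1, p.2) ∈ nu lam c := hnp
              rw [hEold this] at hEp
              have := hT'lt this
              omega
            · rintro ⟨hp, hnp⟩
              exact ⟨hp, hEnew ((YoungDiagram.mem_cells _).1 hp) hnp⟩
          have hsub : (nu lam c).cells ⊆ lam.cells := fun p hp =>
            (YoungDiagram.mem_cells _).2 (nu_subset hp)
          rw [hset, Finset.card_sdiff_of_subset hsub,
            card_cells lam hlam, card_cells (nu lam c) hnucol]
          omega
        · have hival : (i : ℕ) < m' := Fin.val_lt_last hi
          have hset : (lam.cells.filter fun p => T p.1 p.2 = (i : ℕ))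
              = (nu lam c).cells.filter fun p => T' p.1 p.2 = (i : ℕ) := by
            ext p
            simp only [Finset.mem_filter, hTapp]
            constructor
            · rintro ⟨hp, hEp⟩
              by_cases hnp : (p.1, p.2) ∈ nu lam c
              · exact ⟨hnp, by rw [hEold hnp] at hEp; exact hEp⟩
              · rw [hEnew ((YoungDiagram.mem_cells _).1 hp) hnp] at hEp
                omega
            · rintro ⟨hp, hEp⟩
              exact ⟨(YoungDiagram.mem_cells _).2 (nu_subset hp), by rw [hEold hp]; exact hEp⟩
          rw [hset]
          have hthis := hT'c ⟨(i : ℕ), hival⟩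
          have hcast : (⟨(i : ℕ), hival⟩ : Fin m').castSucc = i := Fin.ext (by simp)
          rw [hcast] at hthis
          exact hthis
end Backward
section Exchange

variable {m : ℕ}

def Tight (lam : YoungDiagram) (μ : Fin m → ℕ) (A : Finset (Fin m)) : Prop :=
  ∑ a ∈ A, μ a = g lam A.card

lemma tight_union_inter (lam : YoungDiagram) {μ : Fin m → ℕ}
    (hμ : ∀ A : Finset (Fin m), ∑ a ∈ A, μ a ≤ g lam A.card)
    {A B : Finset (Fin m)} (hA : Tight lam μ A) (hB : Tight lam μ B) :
    Tight lam μ (A ∪ B) ∧ Tight lam μ (A ∩ B) := by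
  classical
  have hsum : ∑ a ∈ A ∪ B, μ a + ∑ a ∈ A ∩ B, μ a = ∑ a ∈ A, μ a + ∑ a ∈ B, μ a :=
    Finset.sum_union_inter
  have hcard : (A ∪ B).card + (A ∩ B).card = A.card + B.card :=
    Finset.card_union_add_card_inter A B
  have h1 := hμ (A ∪ B)
  have h2 := hμ (A ∩ B)
  have hconc : g lam (A ∪ B).card + g lam (A ∩ B).card ≤ g lam A.card + g lam B.card := by
    have hab : (A ∩ B).card ≤ B.card := Finset.card_le_card Finset.inter_subset_right
    have haA : (A ∩ B).card ≤ A.card := Finset.card_le_card Finset.inter_subset_left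
    have hcv := g_concave lam (A ∩ B).card B.card (A.card - (A ∩ B).card) hab
    have hu : B.card + (A.card - (A ∩ B).card) = (A ∪ B).card := by omega
    have hd : (A ∩ B).card + (A.card - (A ∩ B).card) = A.card := by omega
    rw [hu, hd] at hcv
    omega
  unfold Tight at *
  omega

/-- exchange move: take one from `i`, give one to `j` -/
def upd (μ : Fin m → ℕ) (i j : Fin m) : Fin m → ℕ :=
  fun k => if k = j then μ j + 1 else if k = i then μ i - 1 else μ k

lemma sum_upd (μ : Fin m → ℕ) {i j : Fin m} (hij : i ≠ j) (hi : 1 ≤ μ i)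
    (A : Finset (Fin m)) :
    (∑ a ∈ A, (upd μ i j a : ℤ)) =
      ∑ a ∈ A, (μ a : ℤ) + (if j ∈ A then 1 else 0) - (if i ∈ A then 1 else 0) := by
  classical
  have hpt : ∀ a : Fin m, (upd μ i j a : ℤ) =
      (μ a : ℤ) + (if a = j then 1 else 0) - (if a = i then 1 else 0) := by
    intro a
    unfold upd
    by_cases h1 : a = j
    · subst h1
      rw [if_pos rfl, if_pos rfl, if_neg (fun h => hij h.symm)]
      push_cast; ring
    · rw [if_neg h1, if_neg h1]
      by_cases h2 : a = i
      · subst h2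
        rw [if_pos rfl, if_pos rfl]
        omega
      · rw [if_neg h2, if_neg h2]
        omega
  rw [Finset.sum_congr rfl (fun a _ => hpt a), Finset.sum_sub_distrib,
    Finset.sum_add_distrib, Finset.sum_ite_eq' A j (fun _ => (1 : ℤ)),
    Finset.sum_ite_eq' A i (fun _ => (1 : ℤ))]

theorem exchange (lam : YoungDiagram) (α β : Fin m → ℕ)
    (hα1 : ∀ A : Finset (Fin m), ∑ a ∈ A, α a ≤ g lam A.card)
    (hα2 : ∑ a, α a = g lam m)
    (hβ1 : ∀ A : Finset (Fin m), ∑ a ∈ A, β a ≤ g lam A.card)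
    (hβ2 : ∑ a, β a = g lam m)
    (i : Fin m) (hi : β i < α i) :
    ∃ j : Fin m, α j < β j ∧
      (∀ A : Finset (Fin m), ∑ a ∈ A, upd α i j a ≤ g lam A.card) ∧
      (∑ a, upd α i j a = g lam m) ∧
      (∀ A : Finset (Fin m), ∑ a ∈ A, upd β j i a ≤ g lam A.card) ∧
      (∑ a, upd β j i a = g lam m) := by
  classical
  -- maximal α-tight set avoiding i
  set fam : Finset (Finset (Fin m)) :=
    Finset.univ.filter (fun A => Tight lam α A ∧ i ∉ A) with hfam
  have hfam0 : ∅ ∈ fam := by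
    simp only [hfam, Finset.mem_filter, Finset.mem_univ, true_and]
    exact ⟨by simp [Tight, g], by simp⟩
  obtain ⟨S, hSfam, hSmax⟩ := Finset.exists_max_image fam Finset.card ⟨∅, hfam0⟩
  rw [hfam, Finset.mem_filter] at hSfam
  obtain ⟨-, hSt, hSi⟩ := hSfam
  have hSall : ∀ V, Tight lam α V → i ∉ V → V ⊆ S := by
    intro V hV hVi
    have hUt : Tight lam α (V ∪ S) := (tight_union_inter lam hα1 hV hSt).1
    have hUmem : (V ∪ S) ∈ fam := by
      simp only [hfam, Finset.mem_filter, Finset.mem_univ, true_and, Finset.mem_union]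
      exact ⟨hUt, by tauto⟩
    have hcard := hSmax _ hUmem
    have heq : S = V ∪ S := Finset.eq_of_subset_of_card_le Finset.subset_union_right hcard
    intro v hv
    rw [heq]
    exact Finset.mem_union_left _ hv
  -- minimal β-tight set containing i
  set fam' : Finset (Finset (Fin m)) :=
    Finset.univ.filter (fun A => Tight lam β A ∧ i ∈ A) with hfam'
  have hfamu : Finset.univ ∈ fam' := by
    simp only [hfam', Finset.mem_filter, Finset.mem_univ, true_and]
    refine ⟨?_, trivial⟩
    unfold Tight
    rwa [Finset.card_univ, Fintype.card_fin]
  obtain ⟨T, hTfam, hTmin⟩ := Finset.exists_min_image fam' Finset.card ⟨_, hfamu⟩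
  rw [hfam', Finset.mem_filter] at hTfam
  obtain ⟨-, hTt, hTi⟩ := hTfam
  have hTall : ∀ V, Tight lam β V → i ∈ V → T ⊆ V := by
    intro V hV hVi
    have hIt : Tight lam β (T ∩ V) := (tight_union_inter lam hβ1 hTt hV).2
    have hImem : (T ∩ V) ∈ fam' := by
      simp only [hfam', Finset.mem_filter, Finset.mem_univ, true_and, Finset.mem_inter]
      exact ⟨hIt, hTi, hVi⟩
    have hcard := hTmin _ hImem
    have heq : T ∩ V = T :=
      Finset.eq_of_subset_of_card_le Finset.inter_subset_left hcard
    intro t ht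
    rw [← heq] at ht
    exact (Finset.mem_inter.1 ht).2
  -- find the exchange index j
  have hkey : ∃ j ∈ T \ S, α j < β j := by
    by_contra hcon
    push_neg at hcon
    have hiTS : i ∈ T \ S := Finset.mem_sdiff.2 ⟨hTi, hSi⟩
    have h1 : (∑ a ∈ T \ S, (β a : ℤ)) < ∑ a ∈ T \ S, (α a : ℤ) := by
      apply Finset.sum_lt_sum (fun a ha => by exact_mod_cast hcon a ha)
      exact ⟨i, hiTS, by exact_mod_cast hi⟩
    have hsplit1 : (∑ a ∈ S ∪ T, (α a : ℤ))
        = ∑ a ∈ S, (α a : ℤ) + ∑ a ∈ T \ S, (α a : ℤ) := by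
      rw [← Finset.union_sdiff_self_eq_union, Finset.sum_union Finset.disjoint_sdiff]
    have hsplit2 : (∑ a ∈ T, (β a : ℤ))
        = ∑ a ∈ T \ S, (β a : ℤ) + ∑ a ∈ T ∩ S, (β a : ℤ) := by
      rw [← Finset.sum_union (Finset.disjoint_sdiff_inter T S), Finset.sdiff_union_inter]
    have hαS : (∑ a ∈ S, (α a : ℤ)) = (g lam S.card : ℤ) := by exact_mod_cast hSt
    have hβT : (∑ a ∈ T, (β a : ℤ)) = (g lam T.card : ℤ) := by exact_mod_cast hTt
    have hαU : (∑ a ∈ S ∪ T, (α a : ℤ)) ≤ (g lam (S ∪ T).card : ℤ) := by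
      exact_mod_cast hα1 (S ∪ T)
    have hβI : (∑ a ∈ T ∩ S, (β a : ℤ)) ≤ (g lam (T ∩ S).card : ℤ) := by
      exact_mod_cast hβ1 (T ∩ S)
    have hconcZ : (g lam (S ∪ T).card : ℤ) + (g lam (T ∩ S).card : ℤ)
        ≤ (g lam S.card : ℤ) + (g lam T.card : ℤ) := by
      have hcard : (S ∪ T).card + (S ∩ T).card = S.card + T.card :=
        Finset.card_union_add_card_inter S T
      have hic : T ∩ S = S ∩ T := Finset.inter_comm T S
      have hab : (S ∩ T).card ≤ T.card := Finset.card_le_card Finset.inter_subset_right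
      have haA : (S ∩ T).card ≤ S.card := Finset.card_le_card Finset.inter_subset_left
      have hcv := g_concave lam (S ∩ T).card T.card (S.card - (S ∩ T).card) hab
      have hu : T.card + (S.card - (S ∩ T).card) = (S ∪ T).card := by omega
      have hd : (S ∩ T).card + (S.card - (S ∩ T).card) = S.card := by omega
      rw [hu, hd] at hcv
      rw [hic]
      exact_mod_cast hcv
    omega
  obtain ⟨j, hjTS, hjlt⟩ := hkey
  rw [Finset.mem_sdiff] at hjTS
  obtain ⟨hjT, hjS⟩ := hjTS
  have hij : i ≠ j := by
    intro h
    rw [h] at hi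
    omega
  have hαi1 : 1 ≤ α i := by omega
  have hβj1 : 1 ≤ β j := by omega
  refine ⟨j, hjlt, ?_, ?_, ?_, ?_⟩
  · -- α - e_i + e_j inequalities
    intro A
    have hid := sum_upd α hij hαi1 A
    have hbase := hα1 A
    by_cases hjA : j ∈ A
    · by_cases hiA : i ∈ A
      · rw [if_pos hjA, if_pos hiA] at hid
        have : (∑ a ∈ A, (upd α i j a : ℤ)) = ∑ a ∈ A, (α a : ℤ) := by omega
        have hb : (∑ a ∈ A, (α a : ℤ)) ≤ (g lam A.card : ℤ) := by exact_mod_cast hbase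
        exact_mod_cast this ▸ hb
      · rw [if_pos hjA, if_neg hiA] at hid
        by_contra hgt
        push_neg at hgt
        have hgt' : (g lam A.card : ℤ) < ∑ a ∈ A, (upd α i j a : ℤ) := by exact_mod_cast hgt
        have htight : Tight lam α A := by
          unfold Tight
          have : (∑ a ∈ A, (α a : ℤ)) = (g lam A.card : ℤ) := by
            have hb : (∑ a ∈ A, (α a : ℤ)) ≤ (g lam A.card : ℤ) := by exact_mod_cast hbase
            omega
          exact_mod_cast this
        exact hjS (hSall A htight hiA hjA)
    · rw [if_neg hjA] at hid
      have hb : (∑ a ∈ A, (α a : ℤ)) ≤ (g lam A.card : ℤ) := by exact_mod_cast hbase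
      have : (∑ a ∈ A, (upd α i j a : ℤ)) ≤ (g lam A.card : ℤ) := by
        by_cases hiA : i ∈ A <;> simp only [hiA, if_pos, if_neg, if_true, if_false] at hid <;> omega
      exact_mod_cast this
  · -- α sum
    have hid := sum_upd α hij hαi1 Finset.univ
    rw [if_pos (Finset.mem_univ j), if_pos (Finset.mem_univ i)] at hid
    have : (∑ a, (upd α i j a : ℤ)) = ∑ a, (α a : ℤ) := by omega
    have h2 : (∑ a, (α a : ℤ)) = (g lam m : ℤ) := by exact_mod_cast hα2
    have := this.trans h2
    exact_mod_cast this
  · -- β - e_j + e_i inequalities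
    intro A
    have hid := sum_upd β hij.symm hβj1 A
    have hbase := hβ1 A
    by_cases hiA : i ∈ A
    · by_cases hjA : j ∈ A
      · rw [if_pos hjA, if_pos hiA] at hid
        have : (∑ a ∈ A, (upd β j i a : ℤ)) = ∑ a ∈ A, (β a : ℤ) := by omega
        have hb : (∑ a ∈ A, (β a : ℤ)) ≤ (g lam A.card : ℤ) := by exact_mod_cast hbase
        exact_mod_cast this ▸ hb
      · rw [if_pos hiA, if_neg hjA] at hid
        by_contra hgt
        push_neg at hgt
        have hgt' : (g lam A.card : ℤ) < ∑ a ∈ A, (upd β j i a : ℤ) := by exact_mod_cast hgt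
        have htight : Tight lam β A := by
          unfold Tight
          have : (∑ a ∈ A, (β a : ℤ)) = (g lam A.card : ℤ) := by
            have hb : (∑ a ∈ A, (β a : ℤ)) ≤ (g lam A.card : ℤ) := by exact_mod_cast hbase
            omega
          exact_mod_cast this
        exact hjA (hTall A htight hiA hjT)
    · rw [if_neg hiA] at hid
      have hb : (∑ a ∈ A, (β a : ℤ)) ≤ (g lam A.card : ℤ) := by exact_mod_cast hbase
      have : (∑ a ∈ A, (upd β j i a : ℤ)) ≤ (g lam A.card : ℤ) := by
        by_cases hjA : j ∈ A <;> simp only [hjA, if_pos, if_neg, if_true, if_false] at hid <;> omega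
      exact_mod_cast this
  · -- β sum
    have hid := sum_upd β hij.symm hβj1 Finset.univ
    rw [if_pos (Finset.mem_univ j), if_pos (Finset.mem_univ i)] at hid
    have : (∑ a, (upd β j i a : ℤ)) = ∑ a, (β a : ℤ) := by omega
    have h2 : (∑ a, (β a : ℤ)) = (g lam m : ℤ) := by exact_mod_cast hβ2
    have := this.trans h2
    exact_mod_cast this

end Exchange

lemma kostka_pos_iff (lam : YoungDiagram) {m : ℕ} (μ : Fin m → ℕ) :
    0 < kostka lam m μ ↔ Nonempty {T : SemistandardYoungTableau lam //
      (∀ c ∈ lam.cells, T c.1 c.2 < m) ∧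
      ∀ i : Fin m, (lam.cells.filter fun c => T c.1 c.2 = (i : ℕ)).card = μ i} := by
  have hfin : Finite {T : SemistandardYoungTableau lam //
      (∀ c ∈ lam.cells, T c.1 c.2 < m) ∧
      ∀ i : Fin m, (lam.cells.filter fun c => T c.1 c.2 = (i : ℕ)).card = μ i} := by
    apply Finite.of_injective
      (fun T (c : {c // c ∈ lam.cells}) => (⟨T.1 c.1.1 c.1.2, T.2.1 c.1 c.2⟩ : Fin m))
    intro T1 T2 heq
    apply Subtype.ext
    apply SemistandardYoungTableau.ext
    intro r j
    by_cases hm : (r, j) ∈ lam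
    · have h := congrFun heq ⟨(r, j), (YoungDiagram.mem_cells _).2 hm⟩
      exact congrArg Fin.val h
    · rw [T1.1.zeros hm, T2.1.zeros hm]
  unfold kostka
  rw [Nat.card_pos_iff]
  exact ⟨fun h => h.1, fun h => ⟨h, hfin⟩⟩

end SchurMC

/-- **The support of a Schur polynomial is M-convex.**
For any partition `lam` with at most `m` parts, the set `{μ ∈ ℕᵐ : K_{lam,μ} > 0}` of weights
of semistandard Young tableaux of shape `lam` with entries in `{1,…,m}`, viewed inside `ℤᵐ`,
is M-convex. -/
theorem schur_support_MConvex (m : ℕ) (lam : YoungDiagram) (hlam : lam.colLen 0 ≤ m) :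
    MConvex {ν : Fin m → ℤ |
      ∃ μ : Fin m → ℕ, (∀ k, ν k = (μ k : ℤ)) ∧ 0 < kostka lam m μ} := by
  intro i να hνα νβ hνβ hlt
  obtain ⟨μα, hμα, hkα⟩ := hνα
  obtain ⟨μβ, hμβ, hkβ⟩ := hνβ
  obtain ⟨⟨Tα, hTαb, hTαc⟩⟩ := (SchurMC.kostka_pos_iff lam μα).1 hkα
  obtain ⟨⟨Tβ, hTβb, hTβc⟩⟩ := (SchurMC.kostka_pos_iff lam μβ).1 hkβ
  have hα := SchurMC.weight_mem_polytope Tα hlam hTαb hTαc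
  have hβ := SchurMC.weight_mem_polytope Tβ hlam hTβb hTβc
  have hi' : μβ i < μα i := by
    have h1 := hμα i
    have h2 := hμβ i
    rw [h1, h2] at hlt
    exact_mod_cast hlt
  obtain ⟨j, hjlt, hA1, hA2, hB1, hB2⟩ :=
    SchurMC.exchange lam μα μβ hα.1 hα.2 hβ.1 hβ.2 i hi'
  have hij : i ≠ j := by
    intro h
    rw [h] at hi'
    omega
  refine ⟨j, ?_, ⟨SchurMC.upd μα i j, ?_, ?_⟩, ⟨SchurMC.upd μβ j i, ?_, ?_⟩⟩
  · rw [hμα j, hμβ j]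
    exact_mod_cast hjlt
  · -- α - e_i + e_j has weight upd μα i j
    intro k
    have hlhs : ((να - Pi.single i 1 + Pi.single j 1 : Fin m → ℤ)) k
        = (μα k : ℤ) - (if k = i then 1 else 0) + (if k = j then 1 else 0) := by
      simp [Pi.single_apply, hμα k]
    rw [hlhs]
    unfold SchurMC.upd
    by_cases h1 : k = j
    · subst h1
      rw [if_pos rfl, if_pos rfl, if_neg (fun h => hij h.symm)]
      push_cast
      ring
    · rw [if_neg h1, if_neg h1]
      by_cases h2 : k = i
      · subst h2
        rw [if_pos rfl, if_pos rfl]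
        omega
      · rw [if_neg h2, if_neg h2]
        omega
  · rw [SchurMC.kostka_pos_iff]
    obtain ⟨T, h1, h2⟩ := SchurMC.exists_tableau m lam hlam (SchurMC.upd μα i j) hA1 hA2
    exact ⟨⟨T, h1, h2⟩⟩
  · -- β - e_j + e_i has weight upd μβ j i
    intro k
    have hlhs : ((νβ - Pi.single j 1 + Pi.single i 1 : Fin m → ℤ)) k
        = (μβ k : ℤ) - (if k = j then 1 else 0) + (if k = i then 1 else 0) := by
      simp [Pi.single_apply, hμβ k]
    rw [hlhs]
    unfold SchurMC.upd
    by_cases h1 : k = i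
    · subst h1
      rw [if_pos rfl, if_pos rfl, if_neg hij]
      push_cast
      ring
    · rw [if_neg h1, if_neg h1]
      by_cases h2 : k = j
      · subst h2
        rw [if_pos rfl, if_pos rfl]
        omega
      · rw [if_neg h2, if_neg h2]
        omega
  · rw [SchurMC.kostka_pos_iff]
    obtain ⟨T, h1, h2⟩ := SchurMC.exists_tableau m lam hlam (SchurMC.upd μβ j i) hB1 hB2
    exact ⟨⟨T, h1, h2⟩⟩
end

section
/- The normalized Schur polynomial of the partition λ = (3,1,1,1,1) in five variables, N(s_λ(x₁,…,x₅)) = (1/12)·x₁x₂x₃x₄x₅·(Σ_{1≤i<j≤5} 3x_ix_j + Σ_{1≤i≤5} 2x_i²), is not a stable polynomial: there exists a point (z₁,…,z₅) ∈ ℂ⁵ with Im(z_i) > 0 for all i at which it vanishes. -/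
/-- The weight function of the tableau associated to a pair `(a, b)`:
each entry `0,…,4` occurs once in column `0`, plus the occurrences of `a` and `b`. -/
def wtf5 (p : Fin 5 × Fin 5) : Fin 5 → ℕ :=
  fun i => 1 + (if p.1 = i then 1 else 0) + (if p.2 = i then 1 else 0)

noncomputable def wt5 (p : Fin 5 × Fin 5) : Fin 5 →₀ ℕ := Finsupp.equivFunOnFinite.symm (wtf5 p)

@[simp] lemma wt5_apply (p : Fin 5 × Fin 5) (i : Fin 5) : wt5 p i = wtf5 p i := rfl

lemma wtf5_inj : ∀ p q : Fin 5 × Fin 5, p.1 ≤ p.2 → q.1 ≤ q.2 →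
    (∀ i, wtf5 p i = wtf5 q i) → p = q := by decide

def pairs5 : Finset (Fin 5 × Fin 5) := Finset.univ.filter fun p => p.1 ≤ p.2

/-- The normalization operator `N`, sending `x^μ` to `x^μ / μ!`. -/
noncomputable def normOp {n : ℕ} (f : MvPolynomial (Fin n) ℝ) : MvPolynomial (Fin n) ℝ :=
  ∑ μ ∈ f.support, MvPolynomial.monomial μ (f.coeff μ / ∏ i, ((μ i).factorial : ℝ))

lemma diag_mem (lam : YoungDiagram) (hlam : lam.rowLens = [3, 1, 1, 1, 1]) :
    ∀ i j : ℕ, (i, j) ∈ lam ↔ (i = 0 ∧ j < 3) ∨ (0 < i ∧ i < 5 ∧ j = 0) := by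
  have hlen : lam.rowLens.length = 5 := by rw [hlam]; rfl
  have hcol : lam.colLen 0 = 5 := by rw [← YoungDiagram.length_rowLens, hlen]
  have hrow : ∀ (i : ℕ) (hi : i < 5), lam.rowLen i = [3,1,1,1,1].get ⟨i, by simpa using hi⟩ := by
    intro i hi
    have h : i < lam.rowLens.length := by omega
    have := YoungDiagram.get_rowLens (μ := lam) (i := i) (h := h)
    rw [← this]
    simp [hlam]
  have hrow0 : ∀ i : ℕ, 5 ≤ i → lam.rowLen i = 0 := by
    intro i hi
    by_contra h
    have : (i, 0) ∈ lam := YoungDiagram.mem_iff_lt_rowLen.2 (by omega)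
    have := YoungDiagram.mem_iff_lt_colLen.1 this
    omega
  intro i j
  rw [YoungDiagram.mem_iff_lt_rowLen]
  rcases lt_or_ge i 5 with hi | hi
  · rw [hrow i hi]
    interval_cases i <;> simp [List.get]
  · rw [hrow0 i hi]; omega

lemma diag_cells (lam : YoungDiagram) (hlam : lam.rowLens = [3, 1, 1, 1, 1]) :
    lam.cells = {(0,0),(0,1),(0,2),(1,0),(2,0),(3,0),(4,0)} := by
  ext ⟨i, j⟩
  rw [YoungDiagram.mem_cells, diag_mem lam hlam]
  simp [Prod.ext_iff]
  omega

lemma weight_card (lam : YoungDiagram) (hlam : lam.rowLens = [3, 1, 1, 1, 1])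
    (T : SemistandardYoungTableau lam)
    (h0 : T 0 0 = 0) (h1 : T 1 0 = 1) (h2 : T 2 0 = 2) (h3 : T 3 0 = 3) (h4 : T 4 0 = 4)
    (i : Fin 5) :
    (lam.cells.filter fun c => T c.1 c.2 = (i : ℕ)).card
      = 1 + (if T 0 1 = (i : ℕ) then 1 else 0) + (if T 0 2 = (i : ℕ) then 1 else 0) := by
  have hI := i.isLt
  rw [diag_cells lam hlam, Finset.card_filter,
    Finset.sum_insert (by decide), Finset.sum_insert (by decide),
    Finset.sum_insert (by decide), Finset.sum_insert (by decide),
    Finset.sum_insert (by decide), Finset.sum_insert (by decide), Finset.sum_singleton]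
  simp only [h0, h1, h2, h3, h4]
  split_ifs <;> omega

lemma col_entries (lam : YoungDiagram) (hlam : lam.rowLens = [3, 1, 1, 1, 1])
    (T : SemistandardYoungTableau lam) (hb : ∀ c ∈ lam.cells, T c.1 c.2 < 5) :
    T 0 0 = 0 ∧ T 1 0 = 1 ∧ T 2 0 = 2 ∧ T 3 0 = 3 ∧ T 4 0 = 4 := by
  have hmem := diag_mem lam hlam
  have m1 : ((1:ℕ), (0:ℕ)) ∈ lam := (hmem 1 0).2 (by omega)
  have m2 : ((2:ℕ), (0:ℕ)) ∈ lam := (hmem 2 0).2 (by omega)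
  have m3 : ((3:ℕ), (0:ℕ)) ∈ lam := (hmem 3 0).2 (by omega)
  have m4 : ((4:ℕ), (0:ℕ)) ∈ lam := (hmem 4 0).2 (by omega)
  have c1 : T 0 0 < T 1 0 := T.col_strict (by norm_num) m1
  have c2 : T 1 0 < T 2 0 := T.col_strict (by norm_num) m2
  have c3 : T 2 0 < T 3 0 := T.col_strict (by norm_num) m3
  have c4 : T 3 0 < T 4 0 := T.col_strict (by norm_num) m4
  have b4 : T 4 0 < 5 := hb (4,0) ((YoungDiagram.mem_cells (4,0)).2 m4)
  omega

/-- the entry function of the tableau associated to a pair `(a, b)` -/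
def ent5 (a b : ℕ) : ℕ → ℕ → ℕ := fun i j =>
  if j = 0 then (if i < 5 then i else 0)
  else if i = 0 ∧ j = 1 then a else if i = 0 ∧ j = 2 then b else 0

lemma kostka_eq (lam : YoungDiagram) (hlam : lam.rowLens = [3, 1, 1, 1, 1]) (μ : Fin 5 → ℕ) :
    kostka lam 5 μ =
      (Finset.univ.filter fun p : Fin 5 × Fin 5 => p.1 ≤ p.2 ∧ ∀ i, wtf5 p i = μ i).card := by
  classical
  have hmem := diag_mem lam hlam
  set S := {T : SemistandardYoungTableau lam //
    (∀ c ∈ lam.cells, T c.1 c.2 < 5) ∧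
    ∀ i : Fin 5, (lam.cells.filter fun c => T c.1 c.2 = (i : ℕ)).card = μ i} with hS
  set P := {p : Fin 5 × Fin 5 // p.1 ≤ p.2 ∧ ∀ i, wtf5 p i = μ i} with hP
  have hbnd1 : ∀ x : S, x.1 0 1 < 5 :=
    fun x => x.2.1 (0,1) ((YoungDiagram.mem_cells (0,1)).2 ((hmem 0 1).2 (by omega)))
  have hbnd2 : ∀ x : S, x.1 0 2 < 5 :=
    fun x => x.2.1 (0,2) ((YoungDiagram.mem_cells (0,2)).2 ((hmem 0 2).2 (by omega)))
  have hle : ∀ x : S, x.1 0 1 ≤ x.1 0 2 :=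
    fun x => x.1.row_weak (by norm_num) ((hmem 0 2).2 (by omega))
  have hwtx : ∀ (x : S) (i : Fin 5),
      wtf5 (⟨x.1 0 1, hbnd1 x⟩, ⟨x.1 0 2, hbnd2 x⟩) i = μ i := by
    intro x i
    obtain ⟨h0, h1, h2, h3, h4⟩ := col_entries lam hlam x.1 x.2.1
    rw [← x.2.2 i, weight_card lam hlam x.1 h0 h1 h2 h3 h4 i]
    simp [wtf5, Fin.ext_iff]
  let G : S → P := fun x => ⟨(⟨x.1 0 1, hbnd1 x⟩, ⟨x.1 0 2, hbnd2 x⟩), hle x, hwtx x⟩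
  have hGbij : Function.Bijective G := by
    constructor
    · intro x y hxy
      have e1 : x.1 0 1 = y.1 0 1 := congrArg (fun p : P => (p.1.1 : ℕ)) hxy
      have e2 : x.1 0 2 = y.1 0 2 := congrArg (fun p : P => (p.1.2 : ℕ)) hxy
      obtain ⟨h0, h1, h2, h3, h4⟩ := col_entries lam hlam x.1 x.2.1
      obtain ⟨g0, g1, g2, g3, g4⟩ := col_entries lam hlam y.1 y.2.1
      apply Subtype.ext
      ext i j
      by_cases hc : (i, j) ∈ lam
      · rcases (hmem i j).1 hc with ⟨rfl, hj⟩ | ⟨hi0, hi5, rfl⟩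
        · interval_cases j
          · rw [h0, g0]
          · exact e1
          · exact e2
        · interval_cases i
          · rw [h1, g1]
          · rw [h2, g2]
          · rw [h3, g3]
          · rw [h4, g4]
      · rw [x.1.zeros hc, y.1.zeros hc]
    · rintro ⟨⟨a, b⟩, hab, hwp⟩
      replace hab : (a : ℕ) ≤ (b : ℕ) := hab
      have ha5 := a.isLt
      have hb5 := b.isLt
      let T : SemistandardYoungTableau lam :=
        { entry := ent5 (a : ℕ) (b : ℕ)
          row_weak' := by
            intro i j1 j2 hj hc
            rw [hmem] at hc
            unfold ent5
            split_ifs <;> omega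
          col_strict' := by
            intro i1 i2 j hi hc
            rw [hmem] at hc
            unfold ent5
            split_ifs <;> omega
          zeros' := by
            intro i j hc
            rw [hmem] at hc
            unfold ent5
            split_ifs <;> omega }
      have hT01 : T 0 1 = (a : ℕ) := by show ent5 (a:ℕ) (b:ℕ) 0 1 = (a:ℕ); norm_num [ent5]
      have hT02 : T 0 2 = (b : ℕ) := by show ent5 (a:ℕ) (b:ℕ) 0 2 = (b:ℕ); norm_num [ent5]
      have hTcol : T 0 0 = 0 ∧ T 1 0 = 1 ∧ T 2 0 = 2 ∧ T 3 0 = 3 ∧ T 4 0 = 4 := by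
        refine ⟨?_, ?_, ?_, ?_, ?_⟩
        · show ent5 (a:ℕ) (b:ℕ) 0 0 = 0; norm_num [ent5]
        · show ent5 (a:ℕ) (b:ℕ) 1 0 = 1; norm_num [ent5]
        · show ent5 (a:ℕ) (b:ℕ) 2 0 = 2; norm_num [ent5]
        · show ent5 (a:ℕ) (b:ℕ) 3 0 = 3; norm_num [ent5]
        · show ent5 (a:ℕ) (b:ℕ) 4 0 = 4; norm_num [ent5]
      have hTb : ∀ c ∈ lam.cells, T c.1 c.2 < 5 := by
        intro c hcc
        rw [diag_cells lam hlam] at hcc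
        simp only [Finset.mem_insert, Finset.mem_singleton] at hcc
        rcases hcc with rfl | rfl | rfl | rfl | rfl | rfl | rfl
        · show ent5 (a:ℕ) (b:ℕ) 0 0 < 5; norm_num [ent5]
        · show ent5 (a:ℕ) (b:ℕ) 0 1 < 5; norm_num [ent5]
        · show ent5 (a:ℕ) (b:ℕ) 0 2 < 5; norm_num [ent5]
        · show ent5 (a:ℕ) (b:ℕ) 1 0 < 5; norm_num [ent5]
        · show ent5 (a:ℕ) (b:ℕ) 2 0 < 5; norm_num [ent5]
        · show ent5 (a:ℕ) (b:ℕ) 3 0 < 5; norm_num [ent5]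
        · show ent5 (a:ℕ) (b:ℕ) 4 0 < 5; norm_num [ent5]
      have hTw : ∀ i : Fin 5, (lam.cells.filter fun c => T c.1 c.2 = (i : ℕ)).card = μ i := by
        intro i
        obtain ⟨u0, u1, u2, u3, u4⟩ := hTcol
        rw [weight_card lam hlam T u0 u1 u2 u3 u4 i, ← hwp i]
        simp [wtf5, Fin.ext_iff, hT01, hT02]
      refine ⟨⟨T, hTb, hTw⟩, ?_⟩
      apply Subtype.ext
      dsimp only [G]
      rw [Prod.mk.injEq]
      exact ⟨Fin.ext hT01, Fin.ext hT02⟩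
  calc kostka lam 5 μ = Nat.card S := rfl
    _ = Nat.card P := Nat.card_congr (Equiv.ofBijective G hGbij)
    _ = _ := by rw [Nat.card_eq_fintype_card, Fintype.card_subtype]

lemma wt5_eq_iff (p : Fin 5 × Fin 5) (ν : Fin 5 →₀ ℕ) :
    wt5 p = ν ↔ ∀ i, wtf5 p i = ν i := by
  rw [DFunLike.ext_iff]
  simp

lemma coeff_pairs (f : MvPolynomial (Fin 5) ℝ)
    (hco : ∀ ν : Fin 5 →₀ ℕ, f.coeff ν =
      ((Finset.univ.filter fun p : Fin 5 × Fin 5 => p.1 ≤ p.2 ∧ ∀ i, wtf5 p i = ν i).card : ℝ))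
    (p : Fin 5 × Fin 5) (hp : p ∈ pairs5) : f.coeff (wt5 p) = 1 := by
  rw [hco]
  rw [show (Finset.univ.filter fun q : Fin 5 × Fin 5 => q.1 ≤ q.2 ∧ ∀ i, wtf5 q i = wt5 p i)
      = {p} from ?_]
  · simp
  · ext q
    simp only [Finset.mem_filter, Finset.mem_univ, true_and, Finset.mem_singleton]
    constructor
    · rintro ⟨hq, hqq⟩
      exact wtf5_inj q p hq (by simpa [pairs5] using hp) hqq
    · rintro rfl
      exact ⟨by simpa [pairs5] using hp, fun i => rfl⟩

lemma support_f (f : MvPolynomial (Fin 5) ℝ)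
    (hco : ∀ ν : Fin 5 →₀ ℕ, f.coeff ν =
      ((Finset.univ.filter fun p : Fin 5 × Fin 5 => p.1 ≤ p.2 ∧ ∀ i, wtf5 p i = ν i).card : ℝ)) :
    f.support = pairs5.image wt5 := by
  ext ν
  rw [MvPolynomial.mem_support_iff, hco ν]
  rw [Nat.cast_ne_zero, ← Nat.pos_iff_ne_zero, Finset.card_pos]
  constructor
  · rintro ⟨q, hq⟩
    simp only [Finset.mem_filter, Finset.mem_univ, true_and] at hq
    exact Finset.mem_image.2 ⟨q, by simp [pairs5, hq.1], (wt5_eq_iff q ν).2 hq.2⟩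
  · intro h
    obtain ⟨q, hq, rfl⟩ := Finset.mem_image.1 h
    refine ⟨q, ?_⟩
    simp only [Finset.mem_filter, Finset.mem_univ, true_and]
    exact ⟨by simpa [pairs5] using hq, fun i => rfl⟩

lemma normOp_f (f : MvPolynomial (Fin 5) ℝ)
    (hco : ∀ ν : Fin 5 →₀ ℕ, f.coeff ν =
      ((Finset.univ.filter fun p : Fin 5 × Fin 5 => p.1 ≤ p.2 ∧ ∀ i, wtf5 p i = ν i).card : ℝ)) :
    normOp f = ∑ p ∈ pairs5,
      MvPolynomial.monomial (wt5 p) (1 / ∏ i, ((wtf5 p i).factorial : ℝ)) := by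
  rw [normOp, support_f f hco]
  rw [Finset.sum_image (fun p hp q hq h => wtf5_inj p q (by simpa [pairs5] using hp)
    (by simpa [pairs5] using hq) (fun i => by rw [← wt5_apply, ← wt5_apply, h]))]
  apply Finset.sum_congr rfl
  intro p hp
  rw [coeff_pairs f hco p hp]
  simp

lemma eval_monomial_wt (z : Fin 5 → ℂ) (p : Fin 5 × Fin 5) (c : ℝ) :
    MvPolynomial.eval₂ (algebraMap ℝ ℂ) z (MvPolynomial.monomial (wt5 p) c)
      = (c : ℂ) * ((z 0 * z 1 * z 2 * z 3 * z 4) * (z p.1 * z p.2)) := by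
  rw [MvPolynomial.eval₂_monomial]
  rw [Finsupp.prod_fintype _ _ (fun i => pow_zero (z i))]
  simp only [wt5_apply, Complex.coe_algebraMap]
  congr 1
  rcases p with ⟨a, b⟩
  fin_cases a <;> fin_cases b <;>
    simp [wtf5, Fin.prod_univ_five] <;> ring

/-- The point `(6+i, -6+i, 2+i, -2+i, i)` in the product of upper half-planes. -/
noncomputable def zpt : Fin 5 → ℂ := ![6+Complex.I, -6+Complex.I, 2+Complex.I, -2+Complex.I, Complex.I]

lemma zpt0 : zpt 0 = 6+Complex.I := rfl
lemma zpt1 : zpt 1 = -6+Complex.I := rfl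
lemma zpt2 : zpt 2 = 2+Complex.I := rfl
lemma zpt3 : zpt 3 = -2+Complex.I := rfl
lemma zpt4 : zpt 4 = Complex.I := rfl

lemma key_sum :
    ∑ p ∈ pairs5, (((1 / ∏ i, ((wtf5 p i).factorial : ℝ)) : ℝ) : ℂ) *
      ((zpt 0 * zpt 1 * zpt 2 * zpt 3 * zpt 4) * (zpt p.1 * zpt p.2)) = 0 := by
  rw [show pairs5 = ({(0,0),(0,1),(0,2),(0,3),(0,4),(1,1),(1,2),(1,3),(1,4),(2,2),(2,3),(2,4),
      (3,3),(3,4),(4,4)} : Finset (Fin 5 × Fin 5)) from by decide]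
  rw [Finset.sum_insert (by decide), Finset.sum_insert (by decide), Finset.sum_insert (by decide),
    Finset.sum_insert (by decide), Finset.sum_insert (by decide), Finset.sum_insert (by decide),
    Finset.sum_insert (by decide), Finset.sum_insert (by decide), Finset.sum_insert (by decide),
    Finset.sum_insert (by decide), Finset.sum_insert (by decide), Finset.sum_insert (by decide),
    Finset.sum_insert (by decide), Finset.sum_insert (by decide), Finset.sum_singleton]
  simp (config := { decide := true }) only [wtf5, Fin.prod_univ_five, zpt0, zpt1, zpt2, zpt3, zpt4]
  norm_num [Nat.factorial]
  linear_combination (456*Complex.I - (380/3)*Complex.I^3 + (19/6)*Complex.I^5) * Complex.I_sq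

/-- **The normalized Schur polynomial of `λ = (3,1,1,1,1)` in five variables is not stable:**
it has a zero in the product of five open upper half-planes. -/
theorem normalized_schur_31111_not_stable (lam : YoungDiagram)
    (hlam : lam.rowLens = [3, 1, 1, 1, 1])
    (f : MvPolynomial (Fin 5) ℝ)
    (hf : ∀ μ : Fin 5 →₀ ℕ, f.coeff μ = (kostka lam 5 fun i => μ i : ℝ)) :
    ∃ z : Fin 5 → ℂ, (∀ i, 0 < (z i).im) ∧
      MvPolynomial.eval₂ (algebraMap ℝ ℂ) z (normOp f) = 0 := by
  have hco : ∀ ν : Fin 5 →₀ ℕ, f.coeff ν =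
      ((Finset.univ.filter fun p : Fin 5 × Fin 5 => p.1 ≤ p.2 ∧ ∀ i, wtf5 p i = ν i).card : ℝ) := by
    intro ν
    rw [hf ν, kostka_eq lam hlam]
  refine ⟨zpt, ?_, ?_⟩
  · intro i
    fin_cases i <;> simp [zpt]
  · rw [normOp_f f hco, MvPolynomial.eval₂_sum]
    simp only [eval_monomial_wt]
    exact key_sum
end
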